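/- The map π : Ẽ → E, π(x,y,u,v) = (x,y,yu,v), is proper: the preimage of any compact subset of E is compact. -/

import Mathlib

/-! On `Ẽ` the relation `u⁴ = v⁴ - 1` bounds `‖u‖` by `‖v‖ + 1`, and `x, y, v` are coordinates of
`π(x,y,u,v)`; so in the sup norm `‖p‖ ≤ ‖π p‖ + 1` on `Ẽ`, and the preimage of a bounded set is
bounded. It is also closed, since `Ẽ` is an algebraic set and `π` is continuous, hence compact. -/

open Bornology

namespace ProperPi

def tildeE : Set (ℂ × ℂ × ℂ × ℂ) :=
  {p | p.2.1 ^ 4 = p.1 ^ 4 - 1 ∧ p.2.2.1 ^ 4 = p.2.2.2 ^ 4 - 1}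

def piMap (p : ℂ × ℂ × ℂ × ℂ) : ℂ × ℂ × ℂ × ℂ :=
  (p.1, p.2.1, p.2.1 * p.2.2.1, p.2.2.2)

theorem continuous_piMap : Continuous piMap := by
  unfold piMap; fun_prop

theorem isClosed_tildeE : IsClosed tildeE :=
  (isClosed_eq (by fun_prop) (by fun_prop)).inter (isClosed_eq (by fun_prop) (by fun_prop))

theorem norm_le_norm_add_one_of_pow_eq_pow_sub_one {𝕜 : Type*} [NormedDivisionRing 𝕜]
    {n : ℕ} (hn : n ≠ 0) {u v : 𝕜} (h : u ^ n = v ^ n - 1) : ‖u‖ ≤ ‖v‖ + 1 := by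
  refine le_of_pow_le_pow_left₀ hn (by positivity) ?_
  calc ‖u‖ ^ n = ‖v ^ n - 1‖ := by rw [← norm_pow, h]
    _ ≤ ‖v‖ ^ n + 1 ^ n := by simpa using norm_sub_le (v ^ n) 1
    _ ≤ (‖v‖ + 1) ^ n := pow_add_pow_le (norm_nonneg v) zero_le_one hn

theorem norm_le_norm_piMap_add_one {p : ℂ × ℂ × ℂ × ℂ} (hp : p ∈ tildeE) :
    ‖p‖ ≤ ‖piMap p‖ + 1 := by
  obtain ⟨x, y, u, v⟩ := p
  set q := piMap (x, y, u, v)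
  have hx : ‖x‖ ≤ ‖q‖ := norm_fst_le q
  have hy : ‖y‖ ≤ ‖q‖ := (norm_fst_le q.2).trans (norm_snd_le q)
  have hv : ‖v‖ ≤ ‖q‖ := (norm_snd_le q.2.2).trans ((norm_snd_le q.2).trans (norm_snd_le q))
  have hu : ‖u‖ ≤ ‖v‖ + 1 := norm_le_norm_add_one_of_pow_eq_pow_sub_one four_ne_zero hp.2
  simp only [norm_prod_le_iff]
  refine ⟨?_, ?_, ?_, ?_⟩ <;> linarith

theorem isBounded_tildeE_inter_preimage {K : Set (ℂ × ℂ × ℂ × ℂ)} (hK : IsBounded K) :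
    IsBounded (tildeE ∩ piMap ⁻¹' K) := by
  obtain ⟨C, hC⟩ := isBounded_iff_forall_norm_le.mp hK
  exact isBounded_iff_forall_norm_le.mpr
    ⟨C + 1, fun p ⟨hp, hpK⟩ => (norm_le_norm_piMap_add_one hp).trans (by linarith [hC _ hpK])⟩

end ProperPi

open ProperPi in
/-- `π : Ẽ → E`, `π(x,y,u,v) = (x,y,yu,v)`, is proper: the preimage in `Ẽ` of any
compact subset of `E` is compact. -/
theorem pi_proper :
    ∀ K : Set (ℂ × ℂ × ℂ × ℂ),
      K ⊆ {p : ℂ × ℂ × ℂ × ℂ |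
            p.2.1 ^ 4 = p.1 ^ 4 - 1 ∧ p.2.2.1 ^ 4 = p.2.1 ^ 4 * (p.2.2.2 ^ 4 - 1)} →
      IsCompact K →
      IsCompact
        ({p : ℂ × ℂ × ℂ × ℂ | p.2.1 ^ 4 = p.1 ^ 4 - 1 ∧ p.2.2.1 ^ 4 = p.2.2.2 ^ 4 - 1} ∩
          (fun p : ℂ × ℂ × ℂ × ℂ =>
            ((p.1, p.2.1, p.2.1 * p.2.2.1, p.2.2.2) : ℂ × ℂ × ℂ × ℂ)) ⁻¹' K) := by
  intro K _ hK
  change IsCompact (tildeE ∩ piMap ⁻¹' K)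
  exact Metric.isCompact_of_isClosed_isBounded
    (isClosed_tildeE.inter (hK.isClosed.preimage continuous_piMap))
    (isBounded_tildeE_inter_preimage hK.isBounded)
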